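/- Fix w* > 0, γ ∈ (0,2), and define T(w) = w - (γ/σ'(w*))·(σ(w) - σ(w*)). Then for every initialization w_0 ∈ ℝ, the sequence w_{t+1} = T(w_t) converges to w*. (Global convergence of gradient descent with step size γ/λ, λ = σ'(w*), on 1-D non-separable logistic regression with all data of unit magnitude.) -/

import Mathlib

/-!
Measure progress by the Lyapunov function `V w = |σ w - σ w*|`. If `σ w = s - d` with `s = σ w*`,
a step moves `w = logit (s - d)` to the right by `c d < 2 d / (s (1 - s))`, whereas
`logit (s + d) - logit (s - d) ≥ 2 d / s + 2 d / (1 - s) = 2 d / (s (1 - s))` because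
`log ((1 + x) / (1 - x)) ≥ 2 x`; so the step cannot overshoot past the mirror level `s + d`, and
`V` decreases strictly away from `w*` (the case `σ w > s` is the mirror image under `w ↦ -w`).
A step from `w ≤ w*` lands in `[w, w* + c]` (symmetrically from the right), so orbits stay in a
compact interval, and a LaSalle-type argument gives convergence.
-/

noncomputable def sigmoid (w : ℝ) : ℝ := 1 / (1 + Real.exp (-w))

open Filter Topology Set

theorem sigmoid_eq_real_sigmoid : sigmoid = Real.sigmoid := funext fun _ => one_div _

theorem tendsto_iterate_nhds_of_lyapunov {X : Type*} [TopologicalSpace X] {f : X → X}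
    {V : X → ℝ} {K : Set X} {p x : X} (hK : IsCompact K) (hf : Continuous f) (hV : Continuous V)
    (hfp : f p = p) (hVf : ∀ y ≠ p, V (f y) < V y) (hx : ∀ n, f^[n] x ∈ K) :
    Tendsto (fun n => f^[n] x) atTop (𝓝 p) := by
  set u : ℕ → X := fun n => f^[n] x
  have hanti : Antitone (V ∘ u) := antitone_nat_of_succ_le fun n => by
    simp only [u, Function.comp_apply, Function.iterate_succ_apply']
    by_cases h : f^[n] x = p
    · rw [h, hfp]
    · exact (hVf _ h).le
  have hbdd : BddBelow (range (V ∘ u)) :=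
    (hK.bddBelow_image hV.continuousOn).mono (range_subset_iff.2 fun n => mem_image_of_mem V (hx n))
  have hlim := tendsto_atTop_ciInf hanti hbdd
  have hlim_succ : Tendsto (V ∘ f ∘ u) atTop (𝓝 (⨅ n, (V ∘ u) n)) := by
    refine (hlim.comp (tendsto_add_atTop_nat 1)).congr fun n => ?_
    simp only [u, Function.comp_apply, Function.iterate_succ_apply']
  refine hK.tendsto_nhds_of_unique_mapClusterPt (Eventually.of_forall hx) fun q _ hq => ?_
  by_contra hqp
  have hVq : V q = ⨅ n, (V ∘ u) n :=
    eq_of_nhds_neBot ((hq.continuousAt_comp hV.continuousAt).clusterPt.mono hlim)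
  have hVfq : V (f q) = ⨅ n, (V ∘ u) n :=
    eq_of_nhds_neBot ((hq.continuousAt_comp (hV.comp hf).continuousAt).clusterPt.mono hlim_succ)
  exact (hVf q hqp).ne (hVfq.trans hVq.symm)

namespace Real

noncomputable def logit (y : ℝ) : ℝ := log y - log (1 - y)

theorem sigmoid_logit {y : ℝ} (h0 : 0 < y) (h1 : y < 1) : sigmoid (logit y) = y := by
  rw [sigmoid_def, logit, neg_sub, exp_sub, exp_log (by linarith), exp_log h0]
  field_simp
  ring

theorem logit_sigmoid (w : ℝ) : logit (sigmoid w) = w :=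
  sigmoid_injective (sigmoid_logit (sigmoid_pos w) (sigmoid_lt_one w))

theorem two_mul_le_log_one_add_sub_log_one_sub {x : ℝ} (h0 : 0 ≤ x) (h1 : x < 1) :
    2 * x ≤ log (1 + x) - log (1 - x) := by
  simpa using le_hasSum (hasSum_log_sub_log_of_abs_lt_one (by rwa [abs_of_nonneg h0])) 0
    fun k _ => by positivity

theorem two_mul_div_le_log_add_sub_log_sub {a d : ℝ} (hd : 0 ≤ d) (hda : d < a) :
    2 * d / a ≤ log (a + d) - log (a - d) := by
  have ha : 0 < a := hd.trans_lt hda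
  have hx : 0 < 1 - d / a := sub_pos.2 ((div_lt_one ha).2 hda)
  have hscale : log (a + d) - log (a - d) = log (1 + d / a) - log (1 - d / a) := by
    rw [← log_div (by linarith) (by linarith), ← log_div (by positivity) hx.ne']
    congr 1
    field_simp
  rw [hscale, mul_div_assoc]
  exact two_mul_le_log_one_add_sub_log_one_sub (div_nonneg hd ha.le) (sub_pos.1 hx)

theorem two_mul_div_le_logit_sub_logit {s d : ℝ} (hd : 0 ≤ d) (hds : d < s) (hsd : s + d < 1) :
    2 * d / (s * (1 - s)) ≤ logit (s + d) - logit (s - d) := by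
  have h₁ := two_mul_div_le_log_add_sub_log_sub hd hds
  have h₂ := two_mul_div_le_log_add_sub_log_sub hd (show d < 1 - s by linarith)
  have hsplit : 2 * d / (s * (1 - s)) = 2 * d / s + 2 * d / (1 - s) := by
    field_simp [(by linarith : (0 : ℝ) < s).ne', (by linarith : (0 : ℝ) < 1 - s).ne']
    ring
  rw [hsplit, logit, logit, show 1 - (s - d) = 1 - s + d by ring,
    show 1 - (s + d) = 1 - s - d by ring]
  linarith

theorem sigmoid_add_mul_lt {p w c d : ℝ} (hd : 0 < d) (hc : c * deriv sigmoid p < 2)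
    (hw : sigmoid w = sigmoid p - d) : sigmoid (w + c * d) < sigmoid p + d := by
  set s := sigmoid p
  rw [deriv_sigmoid] at hc
  have hs : 0 < s * (1 - s) := mul_pos (sigmoid_pos p) (sub_pos.2 (sigmoid_lt_one p))
  rcases le_or_gt 1 (s + d) with hsd | hsd
  · exact (sigmoid_lt_one _).trans_le hsd
  have hds : d < s := by linarith [sigmoid_pos w]
  have hstep : c * d < 2 * d / (s * (1 - s)) := by
    rw [lt_div_iff₀ hs]
    nlinarith
  have hgap := two_mul_div_le_logit_sub_logit hd.le hds hsd
  rw [← logit_sigmoid w, hw, ← sigmoid_logit (by linarith) hsd]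
  exact sigmoid_strictMono (by linarith)

theorem sub_lt_sigmoid_sub_mul {p w c d : ℝ} (hd : 0 < d) (hc : c * deriv sigmoid p < 2)
    (hw : sigmoid w = sigmoid p + d) : sigmoid p - d < sigmoid (w - c * d) := by
  have hc' : c * deriv sigmoid (-p) < 2 := by
    convert hc using 2
    simp only [deriv_sigmoid, sigmoid_neg]
    ring
  have := sigmoid_add_mul_lt hd hc' (w := -w) (by rw [sigmoid_neg, sigmoid_neg, hw]; ring)
  rw [show -w + c * d = -(w - c * d) by ring, sigmoid_neg, sigmoid_neg] at this
  linarith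

/-- Gradient descent with step size `c` on the one-dimensional logistic loss minimised at `p`,
whose gradient at `w` is `σ w - σ p`. -/
noncomputable def logisticStep (c p w : ℝ) : ℝ := w - c * (sigmoid w - sigmoid p)

theorem logisticStep_self (c p : ℝ) : logisticStep c p p = p := by
  simp [logisticStep]

theorem continuous_logisticStep (c p : ℝ) : Continuous (logisticStep c p) :=
  continuous_id.sub (continuous_const.mul (continuous_sigmoid.sub continuous_const))

theorem mapsTo_logisticStep_Icc {c p a b : ℝ} (hc : 0 ≤ c) (ha : a ≤ p - c) (hb : p + c ≤ b) :
    MapsTo (logisticStep c p) (Icc a b) (Icc a b) := by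
  intro w ⟨hwa, hwb⟩
  have h₀ := sigmoid_pos w
  have h₁ := sigmoid_lt_one w
  have h₂ := sigmoid_pos p
  have h₃ := sigmoid_lt_one p
  rcases le_total w p with hwp | hpw
  · have := sigmoid_monotone hwp
    constructor <;> simp only [logisticStep] <;> nlinarith
  · have := sigmoid_monotone hpw
    constructor <;> simp only [logisticStep] <;> nlinarith

theorem abs_sigmoid_logisticStep_sub_lt {c p w : ℝ} (hc0 : 0 < c)
    (hc : c * deriv sigmoid p < 2) (hw : w ≠ p) :
    |sigmoid (logisticStep c p w) - sigmoid p| < |sigmoid w - sigmoid p| := by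
  rcases hw.lt_or_gt with hwp | hpw
  · have hd : 0 < sigmoid p - sigmoid w := sub_pos.2 (sigmoid_strictMono hwp)
    have hstep : logisticStep c p w = w + c * (sigmoid p - sigmoid w) := by
      rw [logisticStep]; ring
    have hup := sigmoid_add_mul_lt hd hc (w := w) (by ring)
    have hlow := sigmoid_strictMono (lt_add_of_pos_right w (mul_pos hc0 hd))
    rw [hstep, abs_sub_lt_iff, abs_of_neg (sub_neg.2 (sigmoid_strictMono hwp))]
    constructor <;> linarith
  · have hd : 0 < sigmoid w - sigmoid p := sub_pos.2 (sigmoid_strictMono hpw)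
    have hlow := sub_lt_sigmoid_sub_mul hd hc (w := w) (by ring)
    have hup := sigmoid_strictMono (sub_lt_self w (mul_pos hc0 hd))
    rw [logisticStep, abs_sub_lt_iff, abs_of_pos hd]
    constructor <;> linarith

end Real

theorem global_convergence_1d_sphere_general
    (wstar γ : ℝ) (hγ0 : 0 < γ) (hγ2 : γ < 2)
    (T : ℝ → ℝ)
    (hT : ∀ w, T w = w - (γ / deriv sigmoid wstar) * (sigmoid w - sigmoid wstar)) :
    ∀ w0 : ℝ, Filter.Tendsto (fun t => T^[t] w0) Filter.atTop (nhds wstar) := by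
  intro w0
  rw [sigmoid_eq_real_sigmoid] at hT
  set c := γ / deriv Real.sigmoid wstar
  have hcurv : 0 < deriv Real.sigmoid wstar := by
    rw [Real.deriv_sigmoid]
    exact mul_pos (Real.sigmoid_pos _) (sub_pos.2 (Real.sigmoid_lt_one _))
  have hc0 : 0 < c := div_pos hγ0 hcurv
  have hc2 : c * deriv Real.sigmoid wstar < 2 := by rwa [div_mul_cancel₀ _ hcurv.ne']
  obtain rfl : T = Real.logisticStep c wstar := funext hT
  have horbit : ∀ n, (Real.logisticStep c wstar)^[n] w0 ∈
      Icc (min w0 (wstar - c)) (max w0 (wstar + c)) := fun n =>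
    (Real.mapsTo_logisticStep_Icc hc0.le (min_le_right _ _) (le_max_right _ _)).iterate n
      ⟨min_le_left _ _, le_max_left _ _⟩
  exact tendsto_iterate_nhds_of_lyapunov isCompact_Icc (Real.continuous_logisticStep c wstar)
    (continuous_abs.comp (continuous_sigmoid.sub continuous_const))
    (Real.logisticStep_self c wstar) (fun w hw => Real.abs_sigmoid_logisticStep_sub_lt hc0 hc2 hw)
    horbit

theorem global_convergence_1d_sphere
    (wstar γ : ℝ) (hwstar : 0 < wstar) (hγ0 : 0 < γ) (hγ2 : γ < 2)
    (T : ℝ → ℝ)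
    (hT : ∀ w, T w = w - (γ / deriv sigmoid wstar) * (sigmoid w - sigmoid wstar)) :
    ∀ w0 : ℝ, Filter.Tendsto (fun t => T^[t] w0) Filter.atTop (nhds wstar) :=
  global_convergence_1d_sphere_general wstar γ hγ0 hγ2 T hT
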